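/- arXiv:1508.03945 — 4 statements merged into one kernel-verified Lean document; each statement's English description precedes it below -/
import Mathlib

section
/- Let M be an n×n complex matrix all of whose eigenvalues have strictly negative real part. Define R = ∫₀^∞ (e^{sM})* e^{sM} ds. Then the integral converges, R is Hermitian positive definite, and RM + M*R = -I. -/
/-!
The eigenvalues of `exp M` are the numbers `exp μ` with `μ` an eigenvalue of `M` (because `exp M`
is a polynomial in `M`), so they lie in the open unit disc and Gelfand's formula gives
exponential decay of `‖exp (s • M)‖`. Hence `F s = (exp (s • M))ᴴ * exp (s • M)` is integrable on
`(0, ∞)` and tends to `0`. Each `F s` is positive definite, which the integral inherits, and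
`F' = Mᴴ F + F M`, so integrating over `(0, ∞)` gives `Mᴴ R + R M = F ∞ - F 0 = -1`.
-/

open scoped Matrix.Norms.L2Operator ComplexOrder
open MeasureTheory NormedSpace Matrix
open Filter Asymptotics Topology Set

open Polynomial in
theorem exists_aeval_eq_exp {𝕂 A : Type*} [RCLike 𝕂] [NormedRing A] [NormedAlgebra 𝕂 A]
    [FiniteDimensional 𝕂 A] (a : A) : ∃ p : 𝕂[X], aeval a p = exp a := by
  have : CompleteSpace A := FiniteDimensional.complete 𝕂 A
  have hclosed : IsClosed ((aeval (R := 𝕂) a).range : Set A) :=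
    (Subalgebra.toSubmodule (aeval (R := 𝕂) a).range).closed_of_finiteDimensional
  exact hclosed.mem_of_tendsto (exp_series_hasSum_exp' (𝕂 := 𝕂) a) <| .of_forall fun _ =>
    Subalgebra.sum_mem _ fun k _ =>
      Subalgebra.smul_mem _ (pow_mem (show a ∈ (aeval (R := 𝕂) a).range from ⟨X, aeval_X a⟩) k) _

theorem exists_norm_pow_le_of_spectralRadius_lt_one {A : Type*} [NormedRing A]
    [NormedAlgebra ℂ A] [CompleteSpace A] {a : A} (ha : spectralRadius ℂ a < 1) :
    ∃ r C : ℝ, 0 < r ∧ r < 1 ∧ ∀ k : ℕ, ‖a ^ k‖ ≤ C * r ^ k := by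
  obtain ⟨r, -, har, hr1⟩ := ENNReal.lt_iff_exists_real_btwn.mp ha
  have hr0 : 0 < r := ENNReal.ofReal_pos.mp (pos_of_gt har)
  have hroot : ∀ᶠ k : ℕ in atTop, ‖a ^ k‖ ^ (1 / k : ℝ) < r := by
    filter_upwards [(spectrum.pow_norm_pow_one_div_tendsto_nhds_spectralRadius a).eventually
      (gt_mem_nhds har)] with k hk
    exact (ENNReal.ofReal_lt_ofReal_iff hr0).mp hk
  have hO : (fun k : ℕ => a ^ k) =O[atTop] fun k => r ^ k := by
    refine IsBigO.of_bound 1 ?_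
    filter_upwards [hroot, eventually_ne_atTop 0] with k hk hk0
    rw [one_mul, Real.norm_of_nonneg (by positivity),
      ← Real.rpow_inv_natCast_pow (norm_nonneg (a ^ k)) hk0, ← one_div]
    gcongr
  obtain ⟨C, hC⟩ := (isBigO_nat_atTop_iff fun k hk => absurd hk (pow_ne_zero k hr0.ne')).mp hO
  refine ⟨r, C, hr0, by simpa using hr1, fun k => ?_⟩
  simpa [abs_of_pos hr0] using hC k

theorem isBigO_exp_smul_of_norm_exp_pow_le {A : Type*} [NormedRing A] [NormedAlgebra ℝ A]
    [CompleteSpace A] {a : A} {r C : ℝ} (hr0 : 0 < r) (hr1 : r ≤ 1)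
    (h : ∀ k : ℕ, ‖exp a ^ k‖ ≤ C * r ^ k) :
    (fun s : ℝ => exp (s • a)) =O[atTop] fun s => Real.exp (Real.log r * s) := by
  let +nondep : NormedAlgebra ℚ A := .restrictScalars ℚ ℝ A
  have hC : 0 ≤ C := by simpa using (norm_nonneg _).trans (h 0)
  have hcont : Continuous fun s : ℝ => exp (s • a) := exp_continuous.comp (by fun_prop)
  obtain ⟨B, hB⟩ := (isCompact_Icc (a := (0 : ℝ)) (b := 1)).exists_bound_of_continuousOn
    hcont.continuousOn
  have hsplit (s : ℝ) : exp (s • a) = exp a ^ ⌊s⌋₊ * exp ((s - ⌊s⌋₊) • a) := by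
    rw [← NormedSpace.exp_nsmul,
      ← NormedSpace.exp_add_of_commute ((Commute.refl a).smul_left _ |>.smul_right _),
      ← Nat.cast_smul_eq_nsmul ℝ, ← add_smul, add_sub_cancel]
  refine IsBigO.of_bound (C * B / r) ?_
  filter_upwards [eventually_ge_atTop 0] with s hs
  have hfrac : ‖exp ((s - ⌊s⌋₊) • a)‖ ≤ B :=
    hB _ ⟨sub_nonneg.mpr (Nat.floor_le hs), by linarith [Nat.lt_floor_add_one s]⟩
  have hrpow : r ^ ⌊s⌋₊ ≤ Real.exp (Real.log r * s) / r := by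
    rw [← Real.rpow_def_of_pos hr0, ← Real.rpow_sub_one hr0.ne', ← Real.rpow_natCast]
    exact Real.rpow_le_rpow_of_exponent_ge hr0 hr1 (by linarith [Nat.lt_floor_add_one s])
  calc ‖exp (s • a)‖ ≤ ‖exp a ^ ⌊s⌋₊‖ * ‖exp ((s - ⌊s⌋₊) • a)‖ := by
        rw [hsplit]; exact norm_mul_le _ _
    _ ≤ C * (Real.exp (Real.log r * s) / r) * B := by
        gcongr
        exact (h _).trans (by gcongr)
    _ = C * B / r * ‖Real.exp (Real.log r * s)‖ := by
        rw [Real.norm_of_nonneg (Real.exp_nonneg _)]; ring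

theorem integrableOn_Ioi_of_isBigO_exp_neg {E : Type*} [NormedAddCommGroup E] {f : ℝ → E}
    {a b : ℝ} (hb : 0 < b) (hf : ContinuousOn f (Ici a))
    (ho : f =O[atTop] fun x => Real.exp (-b * x)) : IntegrableOn f (Ioi a) :=
  ((hf.locallyIntegrableOn measurableSet_Ici).integrableOn_of_isBigO_atTop ho
    ⟨Ioi b, Ioi_mem_atTop b, exp_neg_integrableOn_Ioi b hb⟩).mono_set Ioi_subset_Ici_self

theorem mul_integral_Ioi_add_integral_Ioi_mul_of_hasDerivAt {A : Type*} [NormedRing A]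
    [NormedAlgebra ℝ A] [CompleteSpace A] {f : ℝ → A} {P Q : A}
    (hderiv : ∀ s, HasDerivAt f (P * f s + f s * Q) s) (hint : IntegrableOn f (Ioi 0))
    (hlim : Tendsto f atTop (𝓝 0)) :
    P * (∫ s in Ioi 0, f s) + (∫ s in Ioi 0, f s) * Q = -f 0 := by
  rw [← integral_const_mul_of_integrable hint, ← integral_mul_const_of_integrable hint,
    ← integral_add (hint.const_mul P) (hint.mul_const Q), ← zero_sub]
  exact integral_Ioi_of_hasDerivAt_of_tendsto (hderiv 0).continuousAt.continuousWithinAt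
    (fun s _ => hderiv s) ((hint.const_mul P).add (hint.mul_const Q)) hlim

namespace Matrix

variable {ι : Type*} [Fintype ι] [DecidableEq ι]

theorem aeval_mulVec_of_mulVec_eq_smul {R : Type*} [CommRing R] {M : Matrix ι ι R}
    {v : ι → R} {μ : R} (h : M *ᵥ v = μ • v) (p : Polynomial R) :
    Polynomial.aeval M p *ᵥ v = p.eval μ • v := by
  have := Module.End.aeval_apply_of_mem_apply_eq_smul (f := toLinAlgEquiv' M) (p := p)
    (by rwa [toLinAlgEquiv'_apply])
  rwa [Polynomial.aeval_algHom_apply, toLinAlgEquiv'_apply] at this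

theorem exp_mulVec_of_mulVec_eq_smul {M : Matrix ι ι ℂ} {v : ι → ℂ} {μ : ℂ}
    (h : M *ᵥ v = μ • v) : exp M *ᵥ v = Complex.exp μ • v := by
  let L : Matrix ι ι ℂ →L[ℂ] ι → ℂ :=
    LinearMap.toContinuousLinearMap ((LinearMap.applyₗ v).comp toLin'.toLinearMap)
  have hμ := (exp_series_hasSum_exp' (𝕂 := ℂ) μ).smul_const v
  rw [← Complex.exp_eq_exp_ℂ] at hμ
  refine ((exp_series_hasSum_exp' (𝕂 := ℂ) M).mapL L).unique (hμ.congr_fun fun k => ?_)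
  change ((k.factorial : ℂ)⁻¹ • M ^ k) *ᵥ v = _
  have hk : M ^ k *ᵥ v = μ ^ k • v := by
    simpa using aeval_mulVec_of_mulVec_eq_smul h (Polynomial.X ^ k)
  rw [smul_mulVec, hk, smul_smul, smul_eq_mul]

theorem spectrum_exp_subset (M : Matrix ι ι ℂ) :
    spectrum ℂ (exp M) ⊆ Complex.exp '' spectrum ℂ M := by
  cases isEmpty_or_nonempty ι
  · simp [spectrum.of_subsingleton]
  obtain ⟨p, hp⟩ := exists_aeval_eq_exp (𝕂 := ℂ) M
  rw [← hp, spectrum.map_polynomial_aeval]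
  rintro _ ⟨μ, hμ, rfl⟩
  obtain ⟨v, hv⟩ := (Module.End.hasEigenvalue_iff_mem_spectrum.mpr
    ((spectrum_toLin' M).symm ▸ hμ)).exists_hasEigenvector
  have hMv : M *ᵥ v = μ • v := by simpa using Module.End.mem_eigenspace_iff.mp hv.1
  refine ⟨μ, hμ, smul_left_injective ℂ hv.2 ?_⟩
  beta_reduce
  rw [← exp_mulVec_of_mulVec_eq_smul hMv, ← hp, aeval_mulVec_of_mulVec_eq_smul hMv]

theorem spectralRadius_exp_lt_one {M : Matrix ι ι ℂ} (hM : ∀ μ ∈ spectrum ℂ M, μ.re < 0) :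
    spectralRadius ℂ (exp M) < 1 := by
  rcases (spectrum ℂ (exp M)).eq_empty_or_nonempty with h | h
  · simp [spectralRadius, h]
  refine ENNReal.coe_one ▸ spectrum.spectralRadius_lt_of_forall_lt_of_nonempty h fun ν hν => ?_
  obtain ⟨μ, hμ, rfl⟩ := spectrum_exp_subset M hν
  rw [← NNReal.coe_lt_coe, coe_nnnorm, Complex.norm_exp, NNReal.coe_one]
  exact Real.exp_lt_one_iff.mpr (hM μ hμ)

theorem exists_isBigO_exp_smul {M : Matrix ι ι ℂ} (hM : ∀ μ ∈ spectrum ℂ M, μ.re < 0) :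
    ∃ b > 0, (fun s : ℝ => exp (s • M)) =O[atTop] fun s => Real.exp (-b * s) := by
  obtain ⟨r, C, hr0, hr1, hC⟩ :=
    exists_norm_pow_le_of_spectralRadius_lt_one (A := Matrix ι ι ℂ) (spectralRadius_exp_lt_one hM)
  refine ⟨-Real.log r, neg_pos.mpr (Real.log_neg hr0 hr1), ?_⟩
  exact (isBigO_exp_smul_of_norm_exp_pow_le hr0 hr1.le hC).congr_right fun s => by rw [neg_neg]

theorem isBigO_conjTranspose_mul_self {α : Type*} {l : Filter α} {E : α → Matrix ι ι ℂ}
    {g : α → ℝ} (h : E =O[l] g) : (fun x => (E x)ᴴ * E x) =O[l] fun x => g x * g x :=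
  IsBigO.of_norm_left <| (h.norm_left.mul h.norm_left).congr_left fun x =>
    (l2_opNorm_conjTranspose_mul_self (E x)).symm

theorem hasDerivAt_conjTranspose_exp_smul_mul_exp_smul (M : Matrix ι ι ℂ) (s : ℝ) :
    HasDerivAt (fun s : ℝ => (exp (s • M))ᴴ * exp (s • M))
      (Mᴴ * ((exp (s • M))ᴴ * exp (s • M)) + (exp (s • M))ᴴ * exp (s • M) * M) s := by
  have hE := hasDerivAt_exp_smul_const (𝕂 := ℝ) M s
  have hderiv : star (exp (s • M) * M) * exp (s • M) + star (exp (s • M)) * (exp (s • M) * M) =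
      Mᴴ * ((exp (s • M))ᴴ * exp (s • M)) + (exp (s • M))ᴴ * exp (s • M) * M := by
    simp only [star_eq_conjTranspose, conjTranspose_mul, mul_assoc]
  exact (hE.star.fun_mul hE).congr_deriv hderiv

variable {X : Type*} [MeasurableSpace X] {μ : Measure X}

theorem IsHermitian.integral {f : X → Matrix ι ι ℂ} (hf : ∀ᵐ x ∂μ, (f x).IsHermitian) :
    (∫ x, f x ∂μ).IsHermitian :=
  calc (∫ x, f x ∂μ)ᴴ = ∫ x, (f x)ᴴ ∂μ := ((starL' ℝ).integral_comp_comm f).symm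
    _ = ∫ x, f x ∂μ := integral_congr_ae hf

theorem PosDef.integral {f : X → Matrix ι ι ℂ} (hf : Integrable f μ) (hμ : μ ≠ 0)
    (hpos : ∀ᵐ x ∂μ, (f x).PosDef) : (∫ x, f x ∂μ).PosDef := by
  refine .of_dotProduct_mulVec_pos (.integral (hpos.mono fun _ h => h.1)) fun v hv => ?_
  let L : Matrix ι ι ℂ →L[ℂ] ℂ := LinearMap.toContinuousLinearMap
    { toFun := fun A => star v ⬝ᵥ A *ᵥ v
      map_add' := fun A B => by simp [add_mulVec, dotProduct_add]
      map_smul' := fun c A => by simp [smul_mulVec, dotProduct_smul] }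
  have hLpos : ∀ᵐ x ∂μ, 0 < L (f x) := hpos.mono fun x hx => hx.dotProduct_mulVec_pos hv
  have hgpos : ∀ᵐ x ∂μ, 0 < (L (f x)).re := hLpos.mono fun x hx => (Complex.pos_iff.mp hx).1
  have hgint : Integrable (fun x => (L (f x)).re) μ := (L.integrable_comp hf).re
  have hval : star v ⬝ᵥ (∫ x, f x ∂μ) *ᵥ v = ((∫ x, (L (f x)).re ∂μ : ℝ) : ℂ) := calc
    star v ⬝ᵥ (∫ x, f x ∂μ) *ᵥ v = ∫ x, L (f x) ∂μ := (L.integral_comp_comm hf).symm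
    _ = ∫ x, ((L (f x)).re : ℂ) ∂μ := integral_congr_ae <| hLpos.mono fun x hx =>
        Complex.ext rfl (by simpa using (Complex.pos_iff.mp hx).2.symm)
    _ = _ := integral_ofReal
  have hfull : Function.support (fun x => (L (f x)).re) =ᵐ[μ] univ :=
    ae_eq_univ.mpr (ae_iff.mp (hgpos.mono fun _ h => h.ne'))
  rw [hval, Complex.zero_lt_real, integral_pos_iff_support_of_nonneg_ae
    (hgpos.mono fun _ h => h.le) hgint, measure_congr hfull]
  exact Measure.measure_univ_pos.mpr hμ

end Matrix

/-- If all eigenvalues of the complex `n × n` matrix `M` have strictly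
negative real part, then `R = ∫₀^∞ (e^{sM})* e^{sM} ds` converges, is Hermitian positive
definite, and satisfies the Lyapunov equation `R M + M* R = -I`. -/
theorem stmt0 (n : ℕ) (M : Matrix (Fin n) (Fin n) ℂ)
    (hspec : ∀ μ ∈ spectrum ℂ M, μ.re < 0) :
    IntegrableOn (fun s : ℝ => (NormedSpace.exp (s • M))ᴴ * NormedSpace.exp (s • M)) (Set.Ioi 0) volume ∧
    (∫ s in Set.Ioi (0:ℝ), (NormedSpace.exp (s • M))ᴴ * NormedSpace.exp (s • M)).IsHermitian ∧
    (∫ s in Set.Ioi (0:ℝ), (NormedSpace.exp (s • M))ᴴ * NormedSpace.exp (s • M)).PosDef ∧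
    (∫ s in Set.Ioi (0:ℝ), (NormedSpace.exp (s • M))ᴴ * NormedSpace.exp (s • M)) * M +
      Mᴴ * (∫ s in Set.Ioi (0:ℝ), (NormedSpace.exp (s • M))ᴴ * NormedSpace.exp (s • M)) = -1 := by
  obtain ⟨b, hb, hE⟩ := exists_isBigO_exp_smul hspec
  have hF : (fun s : ℝ => (exp (s • M))ᴴ * exp (s • M)) =O[atTop]
      fun s => Real.exp (-(2 * b) * s) :=
    (isBigO_conjTranspose_mul_self hE).congr_right fun s => by rw [← Real.exp_add]; ring_nf
  have hderiv := hasDerivAt_conjTranspose_exp_smul_mul_exp_smul M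
  have hint := integrableOn_Ioi_of_isBigO_exp_neg (a := 0) (by positivity)
    (fun s _ => (hderiv s).continuousAt.continuousWithinAt) hF
  have hlim := hF.trans_tendsto <|
    Real.tendsto_exp_atBot.comp (tendsto_id.const_mul_atTop_of_neg (by linarith))
  refine ⟨hint, .integral (.of_forall fun _ => isHermitian_conjTranspose_mul_self _),
    .integral hint (by simp) (.of_forall fun s => .conjTranspose_mul_self _
      (mulVec_injective_iff_isUnit.mpr (isUnit_exp _))), ?_⟩
  rw [add_comm, mul_integral_Ioi_add_integral_Ioi_mul_of_hasDerivAt hderiv hint hlim]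
  rw [zero_smul, NormedSpace.exp_zero, conjTranspose_one, one_mul]
end

section
/- Let P(ζ) be a monic real polynomial of degree m with all roots real, and s > 0. Then all roots of (1 + s d/dζ) P(ζ) are real, they interlace the roots of P, and the smallest root of (1 + s d/dζ)P is ≤ (smallest root of P) − s. -/
/-!
Write `Q = P + s P'`. Since `(e^{x/s} P(x))' = s⁻¹ e^{x/s} Q(x)`, Rolle's theorem puts a root of `Q`
strictly between any two distinct roots of `P`, and a root of `P` of multiplicity `k` is a root
of `Q` of multiplicity at least `k - 1`. Left of the smallest root `μ₁`,
`Q = P · (1 + s ∑ᵢ (x - μᵢ)⁻¹)`; the bracket is `≤ 0` at `μ₁ - s` (the term of `μ₁` alone is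
`-1/s`) and `≥ 0` at `μ₁ - m s` (each of the `m` terms is `≥ -1/(m s)`), so `Q` has a root in
`[μ₁ - m s, μ₁ - s]`. Counted with multiplicity these are `m = deg Q` roots, hence all of them,
and they interlace the `μᵢ` by construction.
-/

open Polynomial Finset Real

namespace Polynomial

section AddSmulDerivative

variable {R : Type*} [CommRing R] (P : R[X]) {s : R}

theorem rootMultiplicity_sub_one_le_rootMultiplicity_add_smul_derivative
    (hQ : P + s • derivative P ≠ 0) (x : R) :
    P.rootMultiplicity x - 1 ≤ (P + s • derivative P).rootMultiplicity x := by
  have hP := P.pow_rootMultiplicity_dvd x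
  rw [le_rootMultiplicity_iff hQ, smul_eq_C_mul]
  exact (dvd_trans (pow_dvd_pow _ (Nat.sub_le _ _)) hP).add
    ((pow_sub_one_dvd_derivative_of_pow_dvd hP).mul_left _)

theorem degree_smul_derivative_lt [Nontrivial R] (hP : P ≠ 0) :
    (s • derivative P).degree < P.degree :=
  (degree_smul_le _ _).trans_lt (degree_derivative_lt hP)

theorem Monic.add_smul_derivative [Nontrivial R] {P : R[X]} (hP : P.Monic) :
    (P + s • derivative P).Monic :=
  hP.add_of_left (degree_smul_derivative_lt P hP.ne_zero)

theorem natDegree_add_smul_derivative [Nontrivial R] :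
    (P + s • derivative P).natDegree = P.natDegree := by
  rcases eq_or_ne P 0 with rfl | hP
  · simp
  exact natDegree_eq_of_degree_eq (degree_add_eq_left_of_degree_lt (degree_smul_derivative_lt P hP))

end AddSmulDerivative

section RealAddSmulDerivative

variable (P : ℝ[X]) {s : ℝ}

theorem hasDerivAt_exp_div_mul_eval (hs : s ≠ 0) (x : ℝ) :
    HasDerivAt (fun x => exp (x / s) * P.eval x)
      (exp (x / s) * s⁻¹ * (P + s • derivative P).eval x) x := by
  refine (((hasDerivAt_id x).div_const s).exp.mul (P.hasDerivAt x)).congr_deriv ?_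
  simp only [eval_add, eval_smul, smul_eq_mul, id]
  field_simp

theorem exists_isRoot_add_smul_derivative_mem_Ioo (hs : s ≠ 0) {a b : ℝ} (hab : a < b)
    (ha : P.IsRoot a) (hb : P.IsRoot b) :
    ∃ c ∈ Set.Ioo a b, (P + s • derivative P).IsRoot c := by
  have hd := P.hasDerivAt_exp_div_mul_eval hs
  obtain ⟨c, hc, hc0⟩ := exists_hasDerivAt_eq_zero hab
    (fun x _ => (hd x).continuousAt.continuousWithinAt) (by simp [ha.eq_zero, hb.eq_zero])
    (fun x _ => hd x)
  exact ⟨c, hc, by simpa [hs, exp_ne_zero] using hc0⟩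

end RealAddSmulDerivative

section ProdXSubC

variable {ι : Type*} [Fintype ι] (μ : ι → ℝ)

theorem prod_X_sub_C_eq_multiset_prod :
    ∏ i, (X - C (μ i)) = ((univ.val.map μ).map (X - C ·)).prod := by
  rw [Multiset.map_map]; rfl

theorem isRoot_prod_X_sub_C (j : ι) : (∏ i, (X - C (μ i))).IsRoot (μ j) :=
  (isRoot_prod _ _ _).mpr ⟨j, mem_univ j, root_X_sub_C.mpr rfl⟩

theorem roots_prod_X_sub_C' : (∏ i, (X - C (μ i))).roots = univ.val.map μ := by
  rw [prod_X_sub_C_eq_multiset_prod, roots_multiset_prod_X_sub_C]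

theorem rootMultiplicity_prod_X_sub_C' (x : ℝ) :
    (∏ i, (X - C (μ i))).rootMultiplicity x = #{i | x = μ i} := by
  rw [← count_roots, roots_prod_X_sub_C', Multiset.count_map]; rfl

theorem eval_add_smul_derivative_prod_X_sub_C (s : ℝ) {c : ℝ} (hc : ∀ i, c ≠ μ i) :
    (∏ i, (X - C (μ i)) + s • derivative (∏ i, (X - C (μ i)))).eval c =
      (∏ i, (X - C (μ i))).eval c * (1 + s * ∑ i, (c - μ i)⁻¹) := by
  classical
  simp only [derivative_prod_finset, derivative_X_sub_C, mul_one, eval_add, eval_smul,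
    eval_finsetSum, eval_prod, eval_sub, eval_X, eval_C, smul_eq_mul, mul_add, mul_sum]
  congr 1
  refine sum_congr rfl fun i _ => ?_
  rw [← prod_erase_mul _ _ (mem_univ i)]
  field_simp [sub_ne_zero.mpr (hc i)]

theorem exists_isRoot_add_smul_derivative_mem_Icc {s : ℝ} (hs : 0 < s) {i₀ : ι}
    (hi₀ : ∀ i, μ i₀ ≤ μ i) :
    ∃ c ∈ Set.Icc (μ i₀ - Fintype.card ι * s) (μ i₀ - s),
      (∏ i, (X - C (μ i)) + s • derivative (∏ i, (X - C (μ i)))).IsRoot c := by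
  classical
  set b := μ i₀
  set N : ℝ := (Fintype.card ι : ℝ) with hN_def
  have hN : 1 ≤ N := Nat.one_le_cast.mpr (Fintype.card_pos_iff.mpr ⟨i₀⟩)
  have hsub : ∀ c ∈ Set.Icc (b - N * s) (b - s), ∀ i, c - μ i < 0 := fun c hc i => by
    nlinarith [hc.2, hi₀ i]
  let g : ℝ → ℝ := fun c => 1 + s * ∑ i, (c - μ i)⁻¹
  have hg : ContinuousOn g (Set.Icc (b - N * s) (b - s)) :=
    continuousOn_const.add <| continuousOn_const.mul <| continuousOn_finsetSum _ fun i _ =>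
      (continuousOn_id.sub continuousOn_const).inv₀ fun c hc => (hsub c hc i).ne
  have hg_right : g (b - s) ≤ 0 := by
    have hmem : b - s ∈ Set.Icc (b - N * s) (b - s) := ⟨by nlinarith, le_rfl⟩
    have hsum : ∑ i, (b - s - μ i)⁻¹ ≤ -s⁻¹ := by
      rw [← add_sum_erase _ _ (mem_univ i₀), sub_sub_cancel_left, inv_neg]
      linarith [sum_nonpos fun i (_ : i ∈ univ.erase i₀) => (inv_lt_zero.mpr (hsub _ hmem i)).le]
    nlinarith [mul_le_mul_of_nonneg_left hsum hs.le, mul_inv_cancel₀ hs.ne']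
  have hg_left : 0 ≤ g (b - N * s) := by
    have hmem : b - N * s ∈ Set.Icc (b - N * s) (b - s) := ⟨le_rfl, by nlinarith⟩
    have hsum : -s⁻¹ ≤ ∑ i, (b - N * s - μ i)⁻¹ :=
      calc -s⁻¹ = Fintype.card ι • (b - N * s - b)⁻¹ := by
            rw [nsmul_eq_mul, sub_sub_cancel_left, ← hN_def]; field_simp
        _ ≤ _ := card_nsmul_le_sum _ _ _ fun i _ =>
            (inv_le_inv_of_neg (by nlinarith) (hsub _ hmem i)).mpr (by linarith [hi₀ i])
    nlinarith [mul_le_mul_of_nonneg_left hsum hs.le, mul_inv_cancel₀ hs.ne']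
  obtain ⟨c, hc, hgc⟩ := intermediate_value_Icc' (by nlinarith) hg ⟨hg_right, hg_left⟩
  refine ⟨c, hc, ?_⟩
  rw [IsRoot, eval_add_smul_derivative_prod_X_sub_C μ s fun i => (sub_neg.mp (hsub c hc i)).ne]
  exact mul_eq_zero_of_right _ hgc

end ProdXSubC

theorem eq_prod_X_sub_C_of_map_le_roots {ι : Type*} [Fintype ι] {Q : ℝ[X]} (hQ : Q.Monic)
    (hdeg : Q.natDegree = Fintype.card ι) {ν : ι → ℝ} (hν : univ.val.map ν ≤ Q.roots) :
    Q = ∏ i, (X - C (ν i)) := by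
  have hroots : Q.roots = univ.val.map ν :=
    (Multiset.eq_of_le_of_card_le hν (by simpa [hdeg] using card_roots' Q)).symm
  rw [prod_X_sub_C_eq_multiset_prod, ← hroots,
    prod_multiset_X_sub_C_of_monic_of_roots_card_eq hQ (by simp [hroots, hdeg])]

-- `ν` takes a value `μ j` only at indices with `ν i = μ i`, never at the first index where `μ`
-- takes it, and takes any other value at most once.
theorem map_le_roots_of_interlacing {ι : Type*} [Fintype ι] [LinearOrder ι] {Q : ℝ[X]} (hQ : Q ≠ 0)
    {μ ν : ι → ℝ} (hle : ∀ i, ν i ≤ μ i) (hlt : ∀ i j, i < j → μ i ≤ ν j)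
    (hnew : ∀ i, ν i < μ i → Q.IsRoot (ν i) ∧ ∀ j, ν i ≠ μ j)
    (hrepeat : ∀ i, ν i = μ i → ∃ j < i, μ j = μ i)
    (hmult : ∀ x, #{i | x = μ i} - 1 ≤ Q.rootMultiplicity x) :
    univ.val.map ν ≤ Q.roots := by
  refine Multiset.le_iff_count.mpr fun x => ?_
  rw [count_roots, Multiset.count_map]
  change #{i | x = ν i} ≤ _
  by_cases hT : ∃ j, x = μ j
  · have hxμ : ∀ i, x = ν i → x = μ i := fun i hi => by
      obtain ⟨j, hj⟩ := hT
      by_contra hne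
      exact (hnew i ((hle i).lt_of_ne (hi ▸ hne))).2 j (hi ▸ hj)
    set T : Finset ι := {i | x = μ i}
    have hTne : T.Nonempty :=
      let ⟨j, hj⟩ := hT
      ⟨j, mem_filter.mpr ⟨mem_univ j, hj⟩⟩
    have hsub : ({i | x = ν i} : Finset ι) ⊆ T.erase (T.min' hTne) := by
      intro i hi
      have hiν : x = ν i := (mem_filter.mp hi).2
      have hiμ : x = μ i := hxμ i hiν
      refine mem_erase.mpr ⟨fun hmin => ?_, mem_filter.mpr ⟨mem_univ i, hiμ⟩⟩
      obtain ⟨j, hji, hj⟩ := hrepeat i (hiν.symm.trans hiμ)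
      have := T.min'_le j (mem_filter.mpr ⟨mem_univ j, hiμ.trans hj.symm⟩)
      exact absurd (hmin ▸ this) (not_le.mpr hji)
    calc #{i | x = ν i} ≤ #(T.erase (T.min' hTne)) := card_le_card hsub
      _ = #T - 1 := card_erase_of_mem (T.min'_mem hTne)
      _ ≤ _ := hmult x
  · simp only [not_exists] at hT
    have hν_lt : ∀ i, x = ν i → ν i < μ i := fun i hi =>
      (hle i).lt_of_ne fun h => hT i (hi.trans h)
    rcases ({i | x = ν i} : Finset ι).eq_empty_or_nonempty with hS | ⟨i, hi⟩
    · simp [hS]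
    have hi : x = ν i := (mem_filter.mp hi).2
    calc #{i | x = ν i} ≤ 1 := card_le_one.mpr fun j hj k hk => by
          simp only [mem_filter, mem_univ, true_and] at hj hk
          rcases lt_trichotomy j k with h | h | h
          · exact (((hν_lt j hj).trans_le (hlt j k h)).ne (hj.symm.trans hk)).elim
          · exact h
          · exact (((hν_lt k hk).trans_le (hlt k j h)).ne (hk.symm.trans hj)).elim
      _ ≤ Q.rootMultiplicity x := (rootMultiplicity_pos hQ).mpr (hi ▸ (hnew i (hν_lt i hi)).1)

end Polynomial

theorem exists_interlacing_of_isRoot {n : ℕ} {μ : Fin (n + 1) → ℝ} (hμ : Monotone μ) {Q : ℝ[X]}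
    {c₀ : ℝ} (hc₀ : c₀ < μ 0) (hQc₀ : Q.IsRoot c₀)
    (hgap : ∀ k : Fin n, μ k.castSucc < μ k.succ →
      ∃ c ∈ Set.Ioo (μ k.castSucc) (μ k.succ), Q.IsRoot c) :
    ∃ ν : Fin (n + 1) → ℝ, ν 0 = c₀ ∧ (∀ i, ν i ≤ μ i) ∧ (∀ i j, i < j → μ i ≤ ν j) ∧
      (∀ i, ν i < μ i → Q.IsRoot (ν i) ∧ ∀ j, ν i ≠ μ j) ∧
      (∀ i, ν i = μ i → ∃ j < i, μ j = μ i) := by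
  have hstep : ∀ k : Fin n, ∃ c, (c ∈ Set.Ioo (μ k.castSucc) (μ k.succ) ∧ Q.IsRoot c) ∨
      (c = μ k.succ ∧ μ k.castSucc = μ k.succ) := fun k => by
    by_cases hk : μ k.castSucc < μ k.succ
    · obtain ⟨c, hc⟩ := hgap k hk
      exact ⟨c, .inl hc⟩
    · exact ⟨_, .inr ⟨rfl, (hμ k.castSucc_le_succ).antisymm (not_lt.mp hk)⟩⟩
  choose ν' hν' using hstep
  have hle' : ∀ k, μ k.castSucc ≤ ν' k ∧ ν' k ≤ μ k.succ := fun k => by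
    rcases hν' k with ⟨hc, -⟩ | ⟨hc, he⟩
    · exact ⟨hc.1.le, hc.2.le⟩
    · exact ⟨hc ▸ he.le, hc.le⟩
  refine ⟨Fin.cons c₀ ν', rfl, fun i => ?_, fun i j hij => ?_, fun i hi => ?_, fun i hi => ?_⟩
  · cases i using Fin.cases with
    | zero => exact hc₀.le
    | succ k => exact (hle' k).2
  · cases j using Fin.cases with
    | zero => exact absurd hij (Fin.not_lt_zero i)
    | succ k => exact (hμ (Fin.le_castSucc_iff.mpr hij)).trans (hle' k).1
  · cases i using Fin.cases with
    | zero => exact ⟨hQc₀, fun j => (hc₀.trans_le (hμ (Fin.zero_le j))).ne⟩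
    | succ k =>
      simp only [Fin.cons_succ] at hi ⊢
      rcases hν' k with ⟨hc, hroot⟩ | ⟨hc, -⟩
      · refine ⟨hroot, fun j => ?_⟩
        rcases lt_or_ge j k.succ with hj | hj
        · exact ((hμ (Fin.le_castSucc_iff.mpr hj)).trans_lt hc.1).ne'
        · exact (hc.2.trans_le (hμ hj)).ne
      · exact absurd hc hi.ne
  · cases i using Fin.cases with
    | zero => exact absurd hi hc₀.ne
    | succ k =>
      simp only [Fin.cons_succ] at hi
      rcases hν' k with ⟨hc, -⟩ | ⟨-, he⟩
      · exact absurd hi hc.2.ne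
      · exact ⟨k.castSucc, k.castSucc_lt_succ, he⟩

/-- If `P = ∏ᵢ (X - μᵢ)` is a monic real polynomial with real roots
`μ₁ ≤ … ≤ μ_m` and `s > 0`, then `P + s P'` has `m` real roots `ν₁ ≤ … ≤ ν_m` which
interlace the `μᵢ` (`ν₁ ≤ μ₁ ≤ ν₂ ≤ μ₂ ≤ … ≤ ν_m ≤ μ_m`), and moreover the smallest
root satisfies `ν₁ ≤ μ₁ - s`. -/
theorem stmt4 (m : ℕ) (hm : 0 < m) (s : ℝ) (hs : 0 < s)
    (μ : Fin m → ℝ) (hμ : Monotone μ) :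
    ∃ ν : Fin m → ℝ, Monotone ν ∧
      (∏ i, (X - C (μ i))) + s • derivative (∏ i, (X - C (μ i))) =
        ∏ i, (X - C (ν i)) ∧
      (∀ i, ν i ≤ μ i) ∧
      (∀ i j : Fin m, (i : ℕ) + 1 = (j : ℕ) → μ i ≤ ν j) ∧
      ν ⟨0, hm⟩ ≤ μ ⟨0, hm⟩ - s := by
  obtain ⟨n, rfl⟩ : ∃ n, m = n + 1 := ⟨m - 1, by omega⟩
  set P : ℝ[X] := ∏ i, (X - C (μ i))
  have hQ : (P + s • derivative P).Monic := (monic_prod_X_sub_C μ univ).add_smul_derivative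
  obtain ⟨c₀, hc₀, hQc₀⟩ :=
    exists_isRoot_add_smul_derivative_mem_Icc μ hs (i₀ := 0) fun i => hμ (Fin.zero_le i)
  obtain ⟨ν, hν0, hle, hlt, hnew, hrepeat⟩ :=
    exists_interlacing_of_isRoot hμ (hc₀.2.trans_lt (by linarith)) hQc₀ fun k hk =>
      P.exists_isRoot_add_smul_derivative_mem_Ioo hs.ne' hk (isRoot_prod_X_sub_C μ _)
        (isRoot_prod_X_sub_C μ _)
  have hroots : univ.val.map ν ≤ (P + s • derivative P).roots :=
    map_le_roots_of_interlacing hQ.ne_zero hle hlt hnew hrepeat fun x =>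
      rootMultiplicity_prod_X_sub_C' μ x ▸
        P.rootMultiplicity_sub_one_le_rootMultiplicity_add_smul_derivative hQ.ne_zero x
  refine ⟨ν, fun i j hij => ?_, eq_prod_X_sub_C_of_map_le_roots hQ ?_ hroots, hle,
    fun i j hij => hlt i j (Fin.lt_def.mpr (by omega)), hν0 ▸ hc₀.2⟩
  · rcases hij.eq_or_lt with rfl | h
    · exact le_rfl
    · exact (hle i).trans (hlt i j h)
  · simp [P, natDegree_add_smul_derivative]
end

section
/- Let p(ζ) = ∏_{j=1}^m (ζ - λ_j) with all λ_j real, and let s ∈ ℂ with Im s ≤ 0. If ζ ∈ ℂ satisfies Im ζ < 0, then (1 + s d/dζ)^m p(ζ) ≠ 0. -/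
open Polynomial

private lemma eval_ne_zero_of_im (ζ : ℂ) (hζ : ζ.im < 0) (M : Multiset ℂ)
    (hM : ∀ μ ∈ M, 0 ≤ μ.im) :
    ((M.map fun μ => X - C μ).prod).eval ζ ≠ 0 := by
  rw [eval_multiset_prod, Multiset.map_map]
  apply Multiset.prod_ne_zero
  simp only [Multiset.mem_map, Function.comp, not_exists]
  rintro μ ⟨hμ, h⟩
  simp only [eval_sub, eval_X, eval_C, sub_eq_zero] at h
  have := hM μ hμ
  rw [← h] at this
  linarith

private lemma logderiv_cons (ζ μ : ℂ) (M : Multiset ℂ)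
    (hq0 : ((M.map fun μ => X - C μ).prod).eval ζ ≠ 0) (hu : ζ - μ ≠ 0) :
    (derivative (((μ ::ₘ M).map fun μ => X - C μ).prod)).eval ζ /
        (((μ ::ₘ M).map fun μ => X - C μ).prod).eval ζ
      = (ζ - μ)⁻¹ + (derivative ((M.map fun μ => X - C μ).prod)).eval ζ /
          ((M.map fun μ => X - C μ).prod).eval ζ := by
  rw [Multiset.map_cons, Multiset.prod_cons, derivative_mul]
  simp only [derivative_sub, derivative_X, derivative_C, sub_zero, one_mul,
    eval_add, eval_mul, eval_sub, eval_X, eval_C]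
  field_simp

private lemma inv_im_pos (u : ℂ) (hu : u.im < 0) : 0 < (u⁻¹).im := by
  rw [Complex.inv_im]
  have hu0 : u ≠ 0 := by
    intro h; rw [h] at hu; simp at hu
  have h3 : 0 < Complex.normSq u := Complex.normSq_pos.mpr hu0
  apply div_pos (by linarith) h3

private lemma im_logderiv_nonneg (ζ : ℂ) (hζ : ζ.im < 0) (M : Multiset ℂ)
    (hM : ∀ μ ∈ M, 0 ≤ μ.im) :
    0 ≤ ((derivative ((M.map fun μ => X - C μ).prod)).eval ζ /
        ((M.map fun μ => X - C μ).prod).eval ζ).im := by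
  induction M using Multiset.induction with
  | empty => simp
  | cons μ M ih =>
    have hμ : 0 ≤ μ.im := hM μ (Multiset.mem_cons_self _ _)
    have hM' : ∀ ν ∈ M, 0 ≤ ν.im := fun ν hν => hM ν (Multiset.mem_cons_of_mem hν)
    have hq0 : ((M.map fun μ => X - C μ).prod).eval ζ ≠ 0 :=
      eval_ne_zero_of_im ζ hζ M hM'
    have hu : (ζ - μ) ≠ 0 := by
      intro h
      have : (ζ - μ).im = 0 := by rw [h]; simp
      simp only [Complex.sub_im] at this
      linarith
    rw [logderiv_cons ζ μ M hq0 hu, Complex.add_im]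
    have h1 : 0 < ((ζ - μ)⁻¹).im := by
      apply inv_im_pos
      simp only [Complex.sub_im]; linarith
    linarith [ih hM']

private lemma im_logderiv_pos (ζ : ℂ) (hζ : ζ.im < 0) (M : Multiset ℂ)
    (hM : ∀ μ ∈ M, 0 ≤ μ.im) (hMne : M ≠ 0) :
    0 < ((derivative ((M.map fun μ => X - C μ).prod)).eval ζ /
        ((M.map fun μ => X - C μ).prod).eval ζ).im := by
  obtain ⟨μ, hμmem⟩ := Multiset.exists_mem_of_ne_zero hMne
  obtain ⟨M₀, rfl⟩ := Multiset.exists_cons_of_mem hμmem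
  have hμ : 0 ≤ μ.im := hM μ (Multiset.mem_cons_self _ _)
  have hM' : ∀ ν ∈ M₀, 0 ≤ ν.im := fun ν hν => hM ν (Multiset.mem_cons_of_mem hν)
  have hq0 : ((M₀.map fun μ => X - C μ).prod).eval ζ ≠ 0 :=
    eval_ne_zero_of_im ζ hζ M₀ hM'
  have hu : (ζ - μ) ≠ 0 := by
    intro h
    have : (ζ - μ).im = 0 := by rw [h]; simp
    simp only [Complex.sub_im] at this
    linarith
  rw [logderiv_cons ζ μ M₀ hq0 hu, Complex.add_im]
  have h1 : 0 < ((ζ - μ)⁻¹).im := by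
    apply inv_im_pos
    simp only [Complex.sub_im]; linarith
  linarith [im_logderiv_nonneg ζ hζ M₀ hM']

private lemma step (m : ℕ) (s : ℂ) (hs : s.im ≤ 0) (M : Multiset ℂ)
    (hcard : Multiset.card M = m) (hM : ∀ μ ∈ M, 0 ≤ μ.im) :
    ∃ M' : Multiset ℂ, Multiset.card M' = m ∧ (∀ μ ∈ M', 0 ≤ μ.im) ∧
      (M.map fun μ => X - C μ).prod + C s * derivative ((M.map fun μ => X - C μ).prod)
        = (M'.map fun μ => X - C μ).prod := by
  set q : Polynomial ℂ := (M.map fun μ => X - C μ).prod with hqdef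
  have hqmonic : q.Monic :=
    monic_multiset_prod_of_monic M (fun μ => X - C μ) (fun μ _ => monic_X_sub_C μ)
  have hqdeg : q.natDegree = m := by
    rw [hqdef, natDegree_multiset_prod_X_sub_C_eq_card, hcard]
  rcases Nat.eq_zero_or_pos m with hm | hm
  · refine ⟨0, by simp [hm], by simp, ?_⟩
    have : M = 0 := Multiset.card_eq_zero.mp (by omega)
    subst this
    simp [hqdef]
  set T : Polynomial ℂ := q + C s * derivative q with hTdef
  have h1 : (C s * derivative q).natDegree < q.natDegree := by
    calc (C s * derivative q).natDegree ≤ (derivative q).natDegree :=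
          natDegree_C_mul_le _ _
      _ ≤ q.natDegree - 1 := natDegree_derivative_le q
      _ < q.natDegree := by omega
  have hdegT : T.natDegree = m := by
    rw [hTdef, natDegree_add_eq_left_of_natDegree_lt h1, hqdeg]
  have hq0 : q ≠ 0 := hqmonic.ne_zero
  have hTmonic : T.Monic := hqmonic.add_of_left (degree_lt_degree h1)
  have hT0 : T ≠ 0 := hTmonic.ne_zero
  have hcardroots : Multiset.card T.roots = T.natDegree :=
    splits_iff_card_roots.mp (IsAlgClosed.splits T)
  have hfact : (T.roots.map fun a => X - C a).prod = T :=
    prod_multiset_X_sub_C_of_monic_of_roots_card_eq hTmonic hcardroots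
  refine ⟨T.roots, by rw [hcardroots, hdegT], ?_, hfact.symm⟩
  intro z hz
  by_contra hzim
  push_neg at hzim
  have hroot : T.eval z = 0 := isRoot_of_mem_roots hz
  have hqz : q.eval z ≠ 0 := eval_ne_zero_of_im z hzim M hM
  have heval : q.eval z + s * (derivative q).eval z = 0 := by
    simpa [hTdef] using hroot
  set w : ℂ := (derivative q).eval z / q.eval z with hwdef
  have h2 : s * (derivative q).eval z = - q.eval z := by linear_combination heval
  have hsw : s * w = -1 := by
    calc s * w = (s * (derivative q).eval z) / q.eval z := (mul_div_assoc _ _ _).symm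
      _ = - q.eval z / q.eval z := by rw [h2]
      _ = -1 := by rw [neg_div, div_self hqz]
  have hMne : M ≠ 0 := by
    intro h; rw [h] at hcard; simp at hcard; omega
  have hwpos : 0 < w.im := im_logderiv_pos z hzim M hM hMne
  have hw0 : w ≠ 0 := by
    intro h; rw [h] at hwpos; simp at hwpos
  have hseq : s = -1 / w := (eq_div_iff hw0).mpr hsw
  have : 0 < s.im := by
    rw [hseq, neg_div, one_div, Complex.neg_im, Complex.inv_im]
    have h3 : 0 < Complex.normSq w := Complex.normSq_pos.mpr hw0
    rw [neg_div, neg_neg]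
    positivity
  linarith

/-- If `p(ζ) = ∏ⱼ (ζ - λⱼ)` with all `λⱼ` real, `s ∈ ℂ` with `Im s ≤ 0`,
and `ζ ∈ ℂ` with `Im ζ < 0`, then `((1 + s d/dζ)^m p)(ζ) ≠ 0`. -/
theorem stmt5 (m : ℕ) (lam : Fin m → ℝ) (s : ℂ) (hs : s.im ≤ 0)
    (ζ : ℂ) (hζ : ζ.im < 0) :
    ((fun q : Polynomial ℂ => q + C s * derivative q)^[m]
        (∏ j, (X - C (lam j : ℂ)))).eval ζ ≠ 0 := by
  have key : ∀ k : ℕ, ∃ M : Multiset ℂ, Multiset.card M = m ∧ (∀ μ ∈ M, 0 ≤ μ.im) ∧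
      (fun q : Polynomial ℂ => q + C s * derivative q)^[k]
        (∏ j, (X - C (lam j : ℂ))) = (M.map fun μ => X - C μ).prod := by
    intro k
    induction k with
    | zero =>
      refine ⟨Finset.univ.val.map (fun j : Fin m => (lam j : ℂ)), ?_, ?_, ?_⟩
      · simp
      · intro μ hμ
        obtain ⟨j, _, rfl⟩ := Multiset.mem_map.mp hμ
        simp
      · rw [Function.iterate_zero_apply, Finset.prod_eq_multiset_prod, Multiset.map_map]
        rfl
    | succ k ih =>
      obtain ⟨M, hcard, hM, hiter⟩ := ih
      obtain ⟨M', hcard', hM', hstep⟩ := step m s hs M hcard hM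
      exact ⟨M', hcard', hM', by rw [Function.iterate_succ_apply', hiter, hstep]⟩
  obtain ⟨M, hcard, hM, hiter⟩ := key m
  rw [hiter]
  exact eval_ne_zero_of_im ζ hζ M hM
end

section
/- Let p(ζ) = ∏_{j=1}^m (ζ - λ_j) where each λ_j ∈ ℂ has Im λ_j ≥ 0. If ζ ∈ ℂ with Im ζ < 0 and s ∈ ℂ with Im s ≤ 0, then p(ζ) + s p'(ζ) ≠ 0. -/
open Polynomial

lemma stmt6_deriv_eval (m : ℕ) (lam : Fin m → ℂ) (ζ : ℂ) :
    (derivative (∏ j, (X - C (lam j)))).eval ζ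
      = ∑ i, ∏ j ∈ Finset.univ.erase i, (ζ - lam j) := by
  rw [Finset.prod_eq_multiset_prod, derivative_prod]
  rw [show (eval ζ) = ⇑(evalRingHom ζ) from rfl]
  simp only [Finset.sum, Finset.prod, Finset.erase]
  rw [map_multiset_sum]
  simp [Multiset.map_map, eval_multiset_prod, Function.comp]
  exact congrArg List.sum (congrArg List.ofFn (funext fun x => by
    simp [eval_multiset_prod, Multiset.map_map]))

/-- If `p(ζ) = ∏ⱼ (ζ - λⱼ)` with `Im λⱼ ≥ 0` for every `j`, and
`ζ, s ∈ ℂ` with `Im ζ < 0` and `Im s ≤ 0`, then `p(ζ) + s p'(ζ) ≠ 0`. -/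
theorem stmt6 (m : ℕ) (lam : Fin m → ℂ) (hlam : ∀ j, 0 ≤ (lam j).im)
    (ζ : ℂ) (hζ : ζ.im < 0) (s : ℂ) (hs : s.im ≤ 0) :
    (∏ j, (X - C (lam j))).eval ζ +
      s * (derivative (∏ j, (X - C (lam j)))).eval ζ ≠ 0 := by
  set f : Fin m → ℂ := fun j => ζ - lam j with hf
  have hfim : ∀ j, (f j).im < 0 := by
    intro j
    simp only [hf, Complex.sub_im]
    linarith [hlam j]
  have hfne : ∀ j, f j ≠ 0 := by
    intro j h
    have := hfim j
    rw [h] at this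
    simp at this
  have hA : (∏ j, f j) ≠ 0 := Finset.prod_ne_zero_iff.2 fun j _ => hfne j
  have hevalp : (∏ j, (X - C (lam j))).eval ζ = ∏ j, f j := by
    simp [eval_prod, hf]
  have hevald : (derivative (∏ j, (X - C (lam j)))).eval ζ
      = (∏ j, f j) * ∑ i, (f i)⁻¹ := by
    rw [stmt6_deriv_eval, Finset.mul_sum]
    apply Finset.sum_congr rfl
    intro i _
    have hpe : (∏ j ∈ Finset.univ.erase i, f j) * f i = ∏ j, f j :=
      Finset.prod_erase_mul _ _ (Finset.mem_univ i)
    calc (∏ j ∈ Finset.univ.erase i, (ζ - lam j))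
        = (∏ j ∈ Finset.univ.erase i, f j) := rfl
      _ = (∏ j, f j) * (f i)⁻¹ := by
          field_simp [hfne i]
          linear_combination hpe
  rw [hevalp, hevald]
  have key : (1 : ℂ) + s * ∑ i, (f i)⁻¹ ≠ 0 := by
    intro h
    have hs0 : s ≠ 0 := by
      intro h0; rw [h0] at h; simp at h
    have hq : ∑ i, (f i)⁻¹ = -s⁻¹ := by
      field_simp at h ⊢
      linear_combination h
    have hqim : (∑ i, (f i)⁻¹).im ≤ 0 := by
      rw [hq]
      simp only [Complex.neg_im, Complex.inv_im, neg_div, neg_neg]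
      have h2 : (0:ℝ) < Complex.normSq s := Complex.normSq_pos.2 hs0
      have := div_nonpos_iff.2 (Or.inr ⟨hs, h2.le⟩ :
        0 ≤ s.im ∧ Complex.normSq s ≤ 0 ∨ s.im ≤ 0 ∧ 0 ≤ Complex.normSq s)
      exact this
    have hm : 0 < m := by
      rcases Nat.eq_zero_or_pos m with h0 | h0
      · subst h0
        rw [Finset.univ_eq_empty, Finset.sum_empty] at hq
        exact absurd (inv_eq_zero.mp (neg_eq_zero.mp hq.symm)) hs0
      · exact h0
    have hpos : 0 < (∑ i, (f i)⁻¹).im := by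
      rw [Complex.im_sum]
      apply Finset.sum_pos
      · intro i _
        rw [Complex.inv_im]
        have h1 : 0 < Complex.normSq (f i) := Complex.normSq_pos.2 (hfne i)
        have h2 := hfim i
        exact div_pos (by linarith) h1
      · exact Finset.univ_nonempty_iff.2 ⟨⟨0, hm⟩⟩
    linarith
  intro h
  apply key
  have h2 : (∏ j, f j) * (1 + s * ∑ i, (f i)⁻¹) = 0 := by linear_combination h
  exact (mul_eq_zero.1 h2).resolve_left hA
end
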